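/- Let n ≥ 2 be an integer, let c_1, …, c_{n+2} be pairwise distinct elements of Ω, and set S = {c_1,…,c_{n+2}}. There do not exist functions f_1, …, f_{n+2}, each lying in the image of β*_{n,n-1} : F_2^{[Ω]^{n-1}} → F_2^{[Ω]^n}, such that: (i) f_i(S∖{c_i,c_j}) = f_j(S∖{c_i,c_j}) for all i ≠ j in {1,…,n+2} with {i,j} ≠ {n+1,n+2}, and (ii) f_{n+1}(S∖{c_{n+1},c_{n+2}}) = f_{n+2}(S∖{c_{n+1},c_{n+2}}) + 1 in F_2. -/

import Mathlib

/-!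
Write `fᵢ = β*_{n,n-1} gᵢ` and `T_{ij} = S ∖ {cᵢ, cⱼ}`. Over `F₂` the composite
`β*_{n+1,n} ∘ β*_{n,n-1}` vanishes, since each `(n-1)`-subset of an `(n+1)`-set lies in exactly
two of its `n`-subsets. Evaluating `β*_{n+1,n} fᵢ` at `S ∖ {cᵢ}` therefore gives
`∑_{j ≠ i} fᵢ(T_{ij}) = 0` for every `i`, so the sum of `fᵢ(T_{ij})` over all ordered pairs
`i ≠ j` is `0`. Grouping `(i, j)` with `(j, i)` instead, conditions (i) and (ii) make every
unordered pair contribute `0` except `{n+1, n+2}`, which contributes `1`.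
-/


/-- The set of `m`-element subsets of `Ω`. -/
abbrev NSubsets (Ω : Type*) (m : ℕ) := {s : Finset Ω // s.card = m}

/-- The dual map `β*_{m,j} : F₂^{[Ω]^j} → F₂^{[Ω]^m}`,
`(β*_{m,j} f)(ω) = Σ_{x ∈ [ω]^j} f(x)`. -/
noncomputable def betaStar (Ω : Type*) (m j : ℕ) :
    (NSubsets Ω j → ZMod 2) →ₗ[ZMod 2] (NSubsets Ω m → ZMod 2) where
  toFun f := fun ω => ∑ x ∈ (Finset.powersetCard j ω.1).attach,
      f ⟨x.1, (Finset.mem_powersetCard.mp x.2).2⟩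
  map_add' f g := by
    funext ω
    simp [Finset.sum_add_distrib]
  map_smul' c f := by
    funext ω
    simp [Finset.mul_sum, smul_eq_mul]

/-- The map `β_{m,j} : F₂[Ω]^m → F₂[Ω]^j` on the free modules, sending a basis
element `ω ∈ [Ω]^m` to `Σ_{ω' ∈ [ω]^j} ω'`. -/
noncomputable def beta (Ω : Type*) (m j : ℕ) :
    (NSubsets Ω m →₀ ZMod 2) →ₗ[ZMod 2] (NSubsets Ω j →₀ ZMod 2) :=
  Finsupp.lsum (ZMod 2) fun ω =>
    ∑ x ∈ (Finset.powersetCard j ω.1).attach,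
      Finsupp.lsingle ⟨x.1, (Finset.mem_powersetCard.mp x.2).2⟩

/-- The natural action of a permutation of `Ω` on `m`-element subsets of `Ω`. -/
def permImage {Ω : Type*} [DecidableEq Ω] (σ : Equiv.Perm Ω) {n : ℕ}
    (w : NSubsets Ω n) : NSubsets Ω n :=
  ⟨w.1.image σ, by rw [Finset.card_image_of_injective _ σ.injective, w.2]⟩

/-- `V_{B,A}`: functions on `[Ω]^{n-1}` vanishing at every `w` with `w ∩ A ≠ B`. -/
def VBA (Ω : Type*) [DecidableEq Ω] (n : ℕ) (A B : Finset Ω) :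
    Submodule (ZMod 2) (NSubsets Ω (n - 1) → ZMod 2) where
  carrier := {f | ∀ w : NSubsets Ω (n - 1), w.1 ∩ A ≠ B → f w = 0}
  add_mem' := by
    intro f g hf hg w hw
    simp only [Pi.add_apply, hf w hw, hg w hw, add_zero]
  zero_mem' := fun w _ => rfl
  smul_mem' := by
    intro c f hf w hw
    simp only [Pi.smul_apply, hf w hw, smul_zero]

/-- `V_A`: the sum of the subspaces `V_{B,A}` over `B ⊆ A` with `|B| < n - 1`. -/
def VA (Ω : Type*) [DecidableEq Ω] (n : ℕ) (A : Finset Ω) :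
    Submodule (ZMod 2) (NSubsets Ω (n - 1) → ZMod 2) :=
  ⨆ B ∈ {B : Finset Ω | B ⊆ A ∧ B.card < n - 1}, VBA Ω n A B

/-- `W_A = β*_{n,n-1}(V_A)`. -/
noncomputable def WA (Ω : Type*) [DecidableEq Ω] (n : ℕ) (A : Finset Ω) :
    Submodule (ZMod 2) (NSubsets Ω n → ZMod 2) :=
  (VA Ω n A).map (betaStar Ω n (n - 1))

/-- For distinct `c₁, …, c_{n+2}` in `Ω` with `S = {c₁,…,c_{n+2}}`, the `n`-element
subset `S ∖ {cᵢ, cⱼ}` of `Ω` (for `i ≠ j`). -/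
def sdiffPair (Ω : Type*) [DecidableEq Ω] (n : ℕ) (c : Fin (n + 2) → Ω)
    (hc : Function.Injective c) (i j : Fin (n + 2)) (hij : i ≠ j) :
    NSubsets Ω n :=
  ⟨Finset.univ.image c \ {c i, c j}, by
    have hsub : ({c i, c j} : Finset Ω) ⊆ Finset.univ.image c := by
      intro x hx
      simp only [Finset.mem_insert, Finset.mem_singleton] at hx
      rcases hx with rfl | rfl <;> exact Finset.mem_image_of_mem c (Finset.mem_univ _)
    have hcard2 : ({c i, c j} : Finset Ω).card = 2 := by
      rw [Finset.card_insert_of_notMem (by simp [hc.ne hij]), Finset.card_singleton]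
    rw [Finset.card_sdiff_of_subset hsub, hcard2, Finset.card_image_of_injective _ hc,
      Finset.card_univ, Fintype.card_fin]
    omega⟩

namespace Finset

theorem sum_sum_erase_eq_zero_of_add_swap {ι M : Type*} [DecidableEq ι] [AddCommMonoid M]
    (s : Finset ι) (F : ι → ι → M) (hF : ∀ i j, i ≠ j → F i j + F j i = 0) :
    ∑ i ∈ s, ∑ j ∈ s.erase i, F i j = 0 := by
  have hsum : ∑ i ∈ s, ∑ j ∈ s.erase i, F i j =
      ∑ p ∈ s ×ˢ s, if p.1 = p.2 then 0 else F p.1 p.2 := by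
    rw [sum_product]
    refine sum_congr rfl fun i hi => ?_
    rw [← sum_erase_add _ _ hi, if_pos rfl, add_zero]
    exact sum_congr rfl fun j hj => (if_neg (ne_of_mem_erase hj).symm).symm
  rw [hsum]
  refine sum_involution (fun p _ => p.swap) (fun p _ => ?_) (fun p _ hp hswap => ?_)
    (fun p hp => mem_product.mpr (mem_product.mp hp).symm) (fun p _ => p.swap_swap)
  · by_cases h : p.1 = p.2
    · simp [h]
    · simp only [Prod.fst_swap, Prod.snd_swap, if_neg h, if_neg (Ne.symm h)]
      exact hF _ _ h
  · exact hp (if_pos (congrArg Prod.snd hswap))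

theorem sum_sum_erase_eq_one_of_symm_off_pair {ι R : Type*} [DecidableEq ι] [Ring R]
    [CharP R 2] {s : Finset ι} (E : ι → ι → R) {a b : ι} (ha : a ∈ s) (hb : b ∈ s) (hab : a ≠ b)
    (hsymm : ∀ i j, i ≠ j → ({i, j} : Finset ι) ≠ {a, b} → E i j = E j i)
    (hdefect : E a b = E b a + 1) :
    ∑ i ∈ s, ∑ j ∈ s.erase i, E i j = 1 := by
  -- `E'` cancels the defect at `(a, b)`, so it is symmetric off the diagonal.
  set E' : ι → ι → R := fun i j => E i j + if i = a ∧ j = b then 1 else 0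
  have hE'ab : E' a b + E' b a = 0 := by
    simp only [E', hdefect, and_self, if_true, if_neg fun h : b = a ∧ a = b => hab h.2, add_zero]
    rw [add_right_comm, add_assoc, CharTwo.add_self_eq_zero]
  have hE' : ∀ i j, i ≠ j → E' i j + E' j i = 0 := by
    intro i j hij
    by_cases hpair : ({i, j} : Finset ι) = {a, b}
    · obtain ⟨rfl, rfl⟩ | ⟨rfl, rfl⟩ : (i = a ∧ j = b) ∨ (i = b ∧ j = a) := by
        have hcoe := congrArg ((↑) : Finset ι → Set ι) hpair
        rw [coe_pair, coe_pair] at hcoe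
        exact Set.pair_eq_pair_iff.mp hcoe
      · exact hE'ab
      · rw [add_comm]; exact hE'ab
    · have hij' : ¬(i = a ∧ j = b) := by rintro ⟨rfl, rfl⟩; exact hpair rfl
      have hji' : ¬(j = a ∧ i = b) := by rintro ⟨rfl, rfl⟩; exact hpair (pair_comm _ _)
      simp only [E', if_neg hij', if_neg hji', add_zero, hsymm i j hij hpair,
        CharTwo.add_self_eq_zero]
  have hsum : ∑ i ∈ s, ∑ j ∈ s.erase i, E' i j = ∑ i ∈ s, ∑ j ∈ s.erase i, E i j + 1 := by
    simp only [E', sum_add_distrib, ite_and, add_right_inj]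
    rw [sum_eq_single_of_mem a ha fun i _ hi => by simp [hi]]
    simp only [↓reduceIte, sum_ite_eq', mem_erase]
    exact if_pos ⟨hab.symm, hb⟩
  rwa [sum_sum_erase_eq_zero_of_add_swap s E' hE', eq_comm, ← CharTwo.sub_eq_add,
    sub_eq_zero] at hsum

theorem sum_powersetCard_eq_sum_erase {α M : Type*} [DecidableEq α] [AddCommMonoid M]
    {m : ℕ} {T : Finset α} (hT : #T = m + 1) (F : Finset α → M) :
    ∑ x ∈ powersetCard m T, F x = ∑ a ∈ T, F (T.erase a) := by
  symm
  refine sum_bij (fun a _ => T.erase a) (fun a ha => ?_)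
    (fun a ha b _ h => (erase_inj T ha).mp h) (fun x hx => ?_) (fun _ _ => rfl)
  · rw [mem_powersetCard, card_erase_of_mem ha, hT]
    exact ⟨erase_subset a T, rfl⟩
  · rw [mem_powersetCard] at hx
    obtain ⟨a, ha⟩ : ∃ a, T \ x = {a} := by
      rw [← card_eq_one, card_sdiff_of_subset hx.1, hT, hx.2]; omega
    refine ⟨a, sdiff_subset (ha ▸ mem_singleton_self a), ?_⟩
    rw [← sdiff_singleton_eq_erase, ← ha, sdiff_sdiff_eq_self hx.1]

end Finset

open Finset

section BetaStar

variable {Ω : Type*}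

theorem betaStar_apply {m j : ℕ} (g : NSubsets Ω j → ZMod 2) (ω : NSubsets Ω m) :
    betaStar Ω m j g ω = ∑ x ∈ powersetCard j ω.1, Function.extend Subtype.val g 0 x := by
  rw [← sum_attach]
  exact sum_congr rfl fun x _ => (Subtype.val_injective.extend_apply g 0 ⟨x.1, _⟩).symm

theorem betaStar_succ_apply [DecidableEq Ω] {m : ℕ} (g : NSubsets Ω m → ZMod 2)
    (ω : NSubsets Ω (m + 1)) :
    betaStar Ω (m + 1) m g ω = ∑ a ∈ ω.1, Function.extend Subtype.val g 0 (ω.1.erase a) := by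
  rw [betaStar_apply, sum_powersetCard_eq_sum_erase ω.2]

theorem betaStar_comp_betaStar_eq_zero [DecidableEq Ω] (k : ℕ) :
    betaStar Ω (k + 2) (k + 1) ∘ₗ betaStar Ω (k + 1) k = 0 := by
  refine LinearMap.ext fun g => funext fun ω => ?_
  rw [LinearMap.comp_apply, betaStar_succ_apply, LinearMap.zero_apply, Pi.zero_apply]
  have hface : ∀ a ∈ ω.1, Function.extend Subtype.val (betaStar Ω (k + 1) k g) 0 (ω.1.erase a) =
      ∑ b ∈ ω.1.erase a, Function.extend Subtype.val g 0 ((ω.1.erase a).erase b) := fun a ha => by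
    have hcard : #(ω.1.erase a) = k + 1 := by rw [card_erase_of_mem ha, ω.2]; rfl
    rw [← betaStar_succ_apply g ⟨_, hcard⟩]
    exact Subtype.val_injective.extend_apply (betaStar Ω (k + 1) k g) 0 ⟨_, hcard⟩
  rw [sum_congr rfl hface]
  refine sum_sum_erase_eq_zero_of_add_swap _ _ fun a b _ => ?_
  rw [erase_right_comm, CharTwo.add_self_eq_zero]

end BetaStar

theorem sum_extend_sdiff_pair_eq_zero {Ω : Type*} [DecidableEq Ω] {n : ℕ} (hn : 1 ≤ n)
    {c : Fin (n + 2) → Ω} (hc : Function.Injective c) {h : NSubsets Ω n → ZMod 2}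
    (hh : h ∈ LinearMap.range (betaStar Ω n (n - 1))) (i : Fin (n + 2)) :
    ∑ j ∈ univ.erase i, Function.extend Subtype.val h 0 (univ.image c \ {c i, c j}) = 0 := by
  obtain ⟨k, rfl⟩ : ∃ k, n = k + 1 := ⟨n - 1, by omega⟩
  obtain ⟨g, rfl⟩ := hh
  have hcard : #((univ.image c).erase (c i)) = k + 2 := by
    rw [card_erase_of_mem (mem_image_of_mem c (mem_univ i)), card_image_of_injective _ hc,
      card_univ, Fintype.card_fin]
    rfl
  have hcocycle : ∑ a ∈ (univ.image c).erase (c i), Function.extend Subtype.val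
      (betaStar Ω (k + 1) k g) 0 (((univ.image c).erase (c i)).erase a) = 0 := by
    rw [← betaStar_succ_apply _ ⟨_, hcard⟩, ← LinearMap.comp_apply, betaStar_comp_betaStar_eq_zero]
    rfl
  rw [← image_erase hc, sum_image hc.injOn] at hcocycle
  refine (sum_congr rfl fun j _ => ?_).trans hcocycle
  rw [sdiff_insert, sdiff_singleton_eq_erase, erase_right_comm, image_erase hc]
  rfl

/-- The obstruction to `(n+2)`-existence: with `S = {c₁,…,c_{n+2}}` pairwise distinct,
there is no family `f₁, …, f_{n+2}` of elements of `Im β*_{n,n-1}` such that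
`fᵢ(S∖{cᵢ,cⱼ}) = fⱼ(S∖{cᵢ,cⱼ})` whenever `i ≠ j` and `{i,j} ≠ {n+1,n+2}`, while
`f_{n+1}(S∖{c_{n+1},c_{n+2}}) = f_{n+2}(S∖{c_{n+1},c_{n+2}}) + 1`. -/
theorem no_compatible_family
    (Ω : Type) [DecidableEq Ω] (n : ℕ) (hn : 2 ≤ n)
    (c : Fin (n + 2) → Ω) (hc : Function.Injective c) :
    ¬ ∃ f : Fin (n + 2) → (NSubsets Ω n → ZMod 2),
      (∀ i, f i ∈ LinearMap.range (betaStar Ω n (n - 1))) ∧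
      (∀ (i j : Fin (n + 2)) (hij : i ≠ j),
        ({i, j} : Finset (Fin (n + 2))) ≠
          {(⟨n, by omega⟩ : Fin (n + 2)), (⟨n + 1, by omega⟩ : Fin (n + 2))} →
        f i (sdiffPair Ω n c hc i j hij) = f j (sdiffPair Ω n c hc i j hij)) ∧
      (f ⟨n, by omega⟩ (sdiffPair Ω n c hc ⟨n, by omega⟩ ⟨n + 1, by omega⟩
          (by intro h; rw [Fin.mk.injEq] at h; omega)) =
        f ⟨n + 1, by omega⟩ (sdiffPair Ω n c hc ⟨n, by omega⟩ ⟨n + 1, by omega⟩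
          (by intro h; rw [Fin.mk.injEq] at h; omega)) + 1) := by
  rintro ⟨f, hrange, hcomp, hspec⟩
  have hf : ∀ k i j (hij : i ≠ j), f k (sdiffPair Ω n c hc i j hij) =
      Function.extend Subtype.val (f k) 0 (univ.image c \ {c i, c j}) :=
    fun k i j hij => (Subtype.val_injective.extend_apply _ _ (sdiffPair Ω n c hc i j hij)).symm
  have hsum := sum_sum_erase_eq_one_of_symm_off_pair
    (fun i j => Function.extend Subtype.val (f i) 0 (univ.image c \ {c i, c j}))
    (mem_univ (⟨n, by omega⟩ : Fin (n + 2))) (mem_univ (⟨n + 1, by omega⟩ : Fin (n + 2)))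
    (by simp [Fin.ext_iff]) (fun i j hij hpair => ?_) ?_
  · rw [sum_eq_zero fun i _ => sum_extend_sdiff_pair_eq_zero (by omega) hc (hrange i) i] at hsum
    exact zero_ne_one hsum
  · rw [← hf i i j hij, hcomp i j hij hpair, hf, pair_comm]
  · rw [pair_comm (c ⟨n + 1, _⟩), ← hf, ← hf]
    exact hspec
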